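/- Let n be a positive integer and let a, b be weak compositions of length n. Then the Young atom YA_a equals the Demazure atom A_b if and only if a = b and |a_i − a_{i+1}| ≤ 1 for all 1 ≤ i < n; moreover, for such a, YA_a = A_a = x^a. -/

import Mathlib

open scoped Classical
open MvPolynomial

namespace PaperYR

/-- A filling of a diagram with `m` rows (0-based, indexed from the bottom), where row `i`
has `c i` boxes (0-based column indices), with entries in `{1,…,n}` encoded as `Fin n`
(the value `e : Fin n` encodes the entry `e+1`). -/
def Filling (m n : ℕ) (c : Fin m → ℕ) : Type :=
  ((i : Fin m) × Fin (c i)) → Fin n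

noncomputable instance (m n : ℕ) (c : Fin m → ℕ) : Fintype (Filling m n c) := by
  unfold Filling; infer_instance

/-- The monomial `x^{wt T}` of a filling: the product over all boxes of the variable
indexed by the entry of the box. -/
noncomputable def fmono {m n : ℕ} {c : Fin m → ℕ} (T : Filling m n c) :
    MvPolynomial (Fin n) ℤ :=
  ∏ b : (i : Fin m) × Fin (c i), X (T b)

/-- The monomial of a filling, ignoring the boxes of column `0` (the basement column). -/
noncomputable def fmonoNB {m n : ℕ} {c : Fin m → ℕ} (T : Filling m n c) :
    MvPolynomial (Fin n) ℤ :=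
  ∏ b ∈ Finset.univ.filter (fun b : (i : Fin m) × Fin (c i) => (b.2 : ℕ) ≠ 0), X (T b)

noncomputable def genfun {m n : ℕ} (c : Fin m → ℕ) (P : Filling m n c → Prop) :
    MvPolynomial (Fin n) ℤ :=
  ∑ T ∈ Finset.univ.filter P, fmono T

noncomputable def genfunNB {n : ℕ} (c : Fin n → ℕ) (P : Filling n n c → Prop) :
    MvPolynomial (Fin n) ℤ :=
  ∑ T ∈ Finset.univ.filter P, fmonoNB T

section Preds

variable {m n : ℕ} {c : Fin m → ℕ}

def RowsWeakIncr (T : Filling m n c) : Prop :=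
  ∀ (i : Fin m) (j j' : Fin (c i)), j ≤ j' → T ⟨i, j⟩ ≤ T ⟨i, j'⟩

def RowsWeakDecr (T : Filling m n c) : Prop :=
  ∀ (i : Fin m) (j j' : Fin (c i)), j ≤ j' → T ⟨i, j'⟩ ≤ T ⟨i, j⟩

/-- Every entry of a lower row is strictly smaller than every entry of any higher row. -/
def RowsSeparated (T : Filling m n c) : Prop :=
  ∀ (i i' : Fin m), i < i' → ∀ (j : Fin (c i)) (j' : Fin (c i')), T ⟨i, j⟩ < T ⟨i', j'⟩

def RowsConstant (T : Filling m n c) : Prop :=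
  ∀ (i : Fin m) (j j' : Fin (c i)), T ⟨i, j⟩ = T ⟨i, j'⟩

def FirstColStrictIncr (T : Filling m n c) : Prop :=
  ∀ (i i' : Fin m), i < i' → ∀ (h : 0 < c i) (h' : 0 < c i'), T ⟨i, ⟨0, h⟩⟩ < T ⟨i', ⟨0, h'⟩⟩

def ColumnsDistinct (T : Filling m n c) : Prop :=
  ∀ (i i' : Fin m), i ≠ i' → ∀ (j : Fin (c i)) (j' : Fin (c i')),
    (j : ℕ) = (j' : ℕ) → T ⟨i, j⟩ ≠ T ⟨i', j'⟩

/-- Columns strictly increase from bottom to top. -/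
def ColsStrictIncr (T : Filling m n c) : Prop :=
  ∀ (i i' : Fin m), i < i' → ∀ (j : Fin (c i)) (j' : Fin (c i')),
    (j : ℕ) = (j' : ℕ) → T ⟨i, j⟩ < T ⟨i', j'⟩

/-- Every entry of row `i` (1-based: row `i+1`) is at most its row index. -/
def FlagUpper (T : Filling m n c) : Prop :=
  ∀ (i : Fin m) (j : Fin (c i)), (T ⟨i, j⟩ : ℕ) ≤ (i : ℕ)

/-- Every entry of row `i` (1-based: row `i+1`) is at least its row index. -/
def FlagLower (T : Filling m n c) : Prop :=
  ∀ (i : Fin m) (j : Fin (c i)), (i : ℕ) ≤ (T ⟨i, j⟩ : ℕ)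

/-- Every Type A and Type B triple is an inversion triple. -/
def TriplesAB (T : Filling m n c) : Prop :=
  (∀ (i i' : Fin m), i < i' → c i' ≤ c i →
    ∀ (k : ℕ) (h1 : k + 1 < c i) (h2 : k + 1 < c i'),
      ¬ (T ⟨i', ⟨k + 1, h2⟩⟩ ≤ T ⟨i, ⟨k, Nat.lt_of_succ_lt h1⟩⟩ ∧
         T ⟨i, ⟨k + 1, h1⟩⟩ ≤ T ⟨i', ⟨k + 1, h2⟩⟩)) ∧
  (∀ (i i' : Fin m), i < i' → c i < c i' →
    ∀ (k : ℕ) (h1 : k + 1 < c i') (h2 : k < c i),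
      ¬ (T ⟨i, ⟨k, h2⟩⟩ ≤ T ⟨i', ⟨k, Nat.lt_of_succ_lt h1⟩⟩ ∧
         T ⟨i', ⟨k + 1, h1⟩⟩ ≤ T ⟨i, ⟨k, h2⟩⟩))

/-- Every Type I and Type II Young triple is a Young inversion triple. -/
def TriplesYoung (T : Filling m n c) : Prop :=
  (∀ (i i' : Fin m), i < i' → c i ≤ c i' →
    ∀ (k : ℕ) (h1 : k + 1 < c i') (h2 : k + 1 < c i),
      ¬ (T ⟨i, ⟨k + 1, h2⟩⟩ ≤ T ⟨i', ⟨k + 1, h1⟩⟩ ∧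
         T ⟨i', ⟨k, Nat.lt_of_succ_lt h1⟩⟩ ≤ T ⟨i, ⟨k + 1, h2⟩⟩)) ∧
  (∀ (i i' : Fin m), i < i' → c i' < c i →
    ∀ (k : ℕ) (h1 : k + 1 < c i) (h2 : k < c i'),
      ¬ (T ⟨i', ⟨k, h2⟩⟩ ≤ T ⟨i, ⟨k + 1, h1⟩⟩ ∧
         T ⟨i, ⟨k, Nat.lt_of_succ_lt h1⟩⟩ ≤ T ⟨i', ⟨k, h2⟩⟩))

end Preds

/-- The first entry of each nonempty row equals its row index. -/
def FirstEntryRowIndex {n : ℕ} {c : Fin n → ℕ} (T : Filling n n c) : Prop :=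
  ∀ (i : Fin n) (h : 0 < c i), T ⟨i, ⟨0, h⟩⟩ = i

/-! ### Polynomials indexed by weak compositions (of length `n`, in `n` variables) -/

/-- The key polynomial `κ_a`: generating function of `KSSF(a)`, fillings of `D(rev a)`
with a basement column whose entry in row `i` (1-based) is `n+1-i`. -/
noncomputable def keyPoly (n : ℕ) (a : Fin n → ℕ) : MvPolynomial (Fin n) ℤ :=
  genfunNB (fun i => a i.rev + 1) (fun T =>
    (∀ i : Fin n, T ⟨i, ⟨0, Nat.succ_pos _⟩⟩ = i.rev) ∧
    RowsWeakDecr T ∧ ColumnsDistinct T ∧ TriplesAB T)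

/-- The Young key polynomial `YK_a`: generating function of `YKSSF(a)`, fillings of
`D(rev a)` with a basement column whose entry in row `i` (1-based) is `i`. -/
noncomputable def youngKey (n : ℕ) (a : Fin n → ℕ) : MvPolynomial (Fin n) ℤ :=
  genfunNB (fun i => a i.rev + 1) (fun T =>
    (∀ i : Fin n, T ⟨i, ⟨0, Nat.succ_pos _⟩⟩ = i) ∧
    RowsWeakIncr T ∧ ColumnsDistinct T ∧ TriplesYoung T)

/-- The Demazure atom `A_a`: generating function of `ASSF(a)`. -/
noncomputable def atom (n : ℕ) (a : Fin n → ℕ) : MvPolynomial (Fin n) ℤ :=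
  genfun (n := n) a (fun T =>
    RowsWeakDecr T ∧ ColumnsDistinct T ∧ FirstEntryRowIndex T ∧ TriplesAB T)

/-- The Young atom `YA_a`: generating function of `YASSF(a)`. -/
noncomputable def youngAtom (n : ℕ) (a : Fin n → ℕ) : MvPolynomial (Fin n) ℤ :=
  genfun (n := n) a (fun T =>
    RowsWeakIncr T ∧ ColumnsDistinct T ∧ FirstEntryRowIndex T ∧ TriplesYoung T)

/-- The fundamental slide polynomial `fs_a`: generating function of `FF(a)`. -/
noncomputable def fslide (n : ℕ) (a : Fin n → ℕ) : MvPolynomial (Fin n) ℤ :=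
  genfun (n := n) a (fun T => RowsWeakDecr T ∧ FlagUpper T ∧ RowsSeparated T)

/-- The monomial slide polynomial `ms_a`: generating function of `MF(a)`. -/
noncomputable def mslide (n : ℕ) (a : Fin n → ℕ) : MvPolynomial (Fin n) ℤ :=
  genfun (n := n) a (fun T => RowsWeakDecr T ∧ FlagUpper T ∧ RowsSeparated T ∧ RowsConstant T)

/-- The Young fundamental slide polynomial `yfs_a`: generating function of `YFF(a)`. -/
noncomputable def yfslide (n : ℕ) (a : Fin n → ℕ) : MvPolynomial (Fin n) ℤ :=
  genfun (n := n) a (fun T => RowsWeakIncr T ∧ FlagLower T ∧ RowsSeparated T)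

/-- The Young monomial slide polynomial `yms_a`: generating function of `YMF(a)`. -/
noncomputable def ymslide (n : ℕ) (a : Fin n → ℕ) : MvPolynomial (Fin n) ℤ :=
  genfun (n := n) a (fun T => RowsWeakIncr T ∧ FlagLower T ∧ RowsSeparated T ∧ RowsConstant T)

/-- The fundamental particle `fp_a`: generating function of `LF(a)`. -/
noncomputable def fparticle (n : ℕ) (a : Fin n → ℕ) : MvPolynomial (Fin n) ℤ :=
  genfun (n := n) a (fun T =>
    RowsWeakDecr T ∧ ColumnsDistinct T ∧ FirstEntryRowIndex T ∧ TriplesAB T ∧ RowsSeparated T)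

/-- The Young fundamental particle `yfp_a`: generating function of `YLF(a)`. -/
noncomputable def yfparticle (n : ℕ) (a : Fin n → ℕ) : MvPolynomial (Fin n) ℤ :=
  genfun (n := n) a (fun T =>
    RowsWeakIncr T ∧ ColumnsDistinct T ∧ FirstEntryRowIndex T ∧ TriplesYoung T ∧ RowsSeparated T)

/-- The quasi-key polynomial `QK_a`: generating function of `QF(a)`. -/
noncomputable def quasiKey (n : ℕ) (a : Fin n → ℕ) : MvPolynomial (Fin n) ℤ :=
  genfun (n := n) a (fun T =>
    RowsWeakDecr T ∧ FlagUpper T ∧ FirstColStrictIncr T ∧ ColumnsDistinct T ∧ TriplesAB T)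

/-- The Young quasi-key polynomial `YQK_a`: generating function of `YQF(a)`. -/
noncomputable def youngQuasiKey (n : ℕ) (a : Fin n → ℕ) : MvPolynomial (Fin n) ℤ :=
  genfun (n := n) a (fun T =>
    RowsWeakIncr T ∧ FlagLower T ∧ FirstColStrictIncr T ∧ ColumnsDistinct T ∧ TriplesYoung T)

/-! ### Polynomials indexed by compositions and partitions -/

/-- The shape of a composition (or partition) given as a list:
row `i` (0-based, from the bottom) has `α.get i` boxes. -/
def cshape (α : List ℕ) : Fin α.length → ℕ := fun i => α.get i

/-- The fundamental quasisymmetric polynomial `F_α(x_1,…,x_n)`, as the generating function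
of fundamental reverse composition tableaux. -/
noncomputable def Fqs (n : ℕ) (α : List ℕ) : MvPolynomial (Fin n) ℤ :=
  genfun (n := n) (cshape α) (fun T => RowsWeakDecr T ∧ RowsSeparated T)

/-- The monomial quasisymmetric polynomial `M_α(x_1,…,x_n)`, as the generating function
of monomial reverse composition tableaux. -/
noncomputable def Mqs (n : ℕ) (α : List ℕ) : MvPolynomial (Fin n) ℤ :=
  genfun (n := n) (cshape α) (fun T => RowsWeakDecr T ∧ RowsSeparated T ∧ RowsConstant T)

/-- The generating function of fundamental Young composition tableaux of shape `α`. -/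
noncomputable def FqsYoung (n : ℕ) (α : List ℕ) : MvPolynomial (Fin n) ℤ :=
  genfun (n := n) (cshape α) (fun T => RowsWeakIncr T ∧ RowsSeparated T)

/-- The generating function of monomial Young composition tableaux of shape `α`. -/
noncomputable def MqsYoung (n : ℕ) (α : List ℕ) : MvPolynomial (Fin n) ℤ :=
  genfun (n := n) (cshape α) (fun T => RowsWeakIncr T ∧ RowsSeparated T ∧ RowsConstant T)

/-- The quasisymmetric Schur polynomial `QS_α(x_1,…,x_n)`: generating function of `RCT(α)`. -/
noncomputable def QSpoly (n : ℕ) (α : List ℕ) : MvPolynomial (Fin n) ℤ :=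
  genfun (n := n) (cshape α) (fun T => RowsWeakDecr T ∧ FirstColStrictIncr T ∧ TriplesAB T)

/-- The Young quasisymmetric Schur polynomial `YQS_α(x_1,…,x_n)`:
generating function of `YCT(α)`. -/
noncomputable def YQSpoly (n : ℕ) (α : List ℕ) : MvPolynomial (Fin n) ℤ :=
  genfun (n := n) (cshape α) (fun T => RowsWeakIncr T ∧ FirstColStrictIncr T ∧ TriplesYoung T)

/-- The Schur polynomial `s_λ(x_1,…,x_n)`: generating function of `SSYT_n(λ)`. -/
noncomputable def schurPoly (n : ℕ) (lam : List ℕ) : MvPolynomial (Fin n) ℤ :=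
  genfun (n := n) (cshape lam) (fun T => RowsWeakIncr T ∧ ColsStrictIncr T)

/-! ### Words, Knuth equivalence, keys, compatible sequences -/

/-- Knuth equivalence: the smallest equivalence relation on words generated by the two
elementary Knuth moves. -/
inductive Knuth : List ℕ → List ℕ → Prop
  | rel1 (u v : List ℕ) (x y z : ℕ) (h1 : x ≤ y) (h2 : y < z) :
      Knuth (u ++ x :: z :: y :: v) (u ++ z :: x :: y :: v)
  | rel2 (u v : List ℕ) (x y z : ℕ) (h1 : x < y) (h2 : y ≤ z) :
      Knuth (u ++ y :: x :: z :: v) (u ++ y :: z :: x :: v)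
  | refl (w : List ℕ) : Knuth w w
  | symm {w w' : List ℕ} : Knuth w w' → Knuth w' w
  | trans {w w' w'' : List ℕ} : Knuth w w' → Knuth w' w'' → Knuth w w''

/-- `f(w)`: replace each letter `i` of `w` by `n+1-i`. -/
def fword (n : ℕ) (w : List ℕ) : List ℕ := w.map (fun x => n + 1 - x)

/-- `frev(w) = f(rev(w))`. -/
def frev (n : ℕ) (w : List ℕ) : List ℕ := fword n w.reverse

/-- The largest part of the weak composition `a`. -/
def maxPart (n : ℕ) (a : Fin n → ℕ) : ℕ := Finset.univ.sup a

/-- The entries of column `j+1` (0-based `j`) of the key `key(a)`, read from top to bottom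
(i.e., in decreasing order): the 1-based row indices `i` with `a_i ≥ j+1`. -/
def keyColWord (n : ℕ) (a : Fin n → ℕ) (j : ℕ) : List ℕ :=
  (((List.finRange n).filter (fun i => decide (j + 1 ≤ a i))).reverse).map (fun i => (i : ℕ) + 1)

/-- `col(key(a))`: the column word of `key(a)`, columns read left to right. -/
def colKey (n : ℕ) (a : Fin n → ℕ) : List ℕ :=
  (List.range (maxPart n a)).flatMap (fun j => keyColWord n a j)

/-- `col_R(key(a))`: the right-to-left column word of `key(a)`. -/
def colRKey (n : ℕ) (a : Fin n → ℕ) : List ℕ :=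
  ((List.range (maxPart n a)).reverse).flatMap (fun j => keyColWord n a j)

/-- `w` is a `b`-compatible word (alphabet `{1,…,n}`). -/
def Compatible (n : ℕ) (b w : List ℕ) : Prop :=
  w.length = b.length ∧
  (∀ x ∈ w, 1 ≤ x ∧ x ≤ n) ∧
  (∀ k : ℕ, k + 1 < w.length → w.getD k 0 ≤ w.getD (k + 1) 0) ∧
  (∀ k : ℕ, k + 1 < b.length → b.getD k 0 < b.getD (k + 1) 0 → w.getD k 0 < w.getD (k + 1) 0) ∧
  (∀ k : ℕ, k < b.length → w.getD k 0 ≤ b.getD k 0)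

/-- `w` is the entrywise maximal `b`-compatible word. -/
def IsMaxCompat (n : ℕ) (b w : List ℕ) : Prop :=
  Compatible n b w ∧ ∀ w' : List ℕ, Compatible n b w' → List.Forall₂ (· ≤ ·) w' w

/-! ### Column word factorization, column-frank words, and left keys -/

/-- Split off the longest strictly decreasing prefix of a word. -/
def decRunSplit : List ℕ → List ℕ × List ℕ
  | [] => ([], [])
  | [x] => ([x], [])
  | x :: y :: r =>
    if y < x then
      let p := decRunSplit (y :: r)
      (x :: p.1, p.2)
    else ([x], y :: r)

def cwfAux : ℕ → List ℕ → List (List ℕ)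
  | 0, _ => []
  | _, [] => []
  | Nat.succ fuel, x :: r =>
    let p := decRunSplit (x :: r)
    p.1 :: cwfAux fuel p.2

/-- The column word factorization of `v`: its decomposition into maximal consecutive
strictly decreasing subwords. -/
def cwf (v : List ℕ) : List (List ℕ) := cwfAux v.length v

/-- The column form of `v`: the lengths of the subwords in its column word factorization. -/
def colform (v : List ℕ) : List ℕ := (cwf v).map List.length

/-- The first subword in the column word factorization of `v`. -/
def firstRun (v : List ℕ) : List ℕ := (cwf v).headD []

/-- The nonzero parts of the conjugate of `sort(a)`. -/
noncomputable def conjParts (n : ℕ) (a : Fin n → ℕ) : List ℕ :=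
  (List.range (maxPart n a)).map
    (fun j => (Finset.univ.filter (fun i : Fin n => j + 1 ≤ a i)).card)

/-- `v` is column-frank (for a tableau of shape `sort(a)`): its column form is a
rearrangement of the nonzero parts of the conjugate partition. -/
def ColumnFrank (n : ℕ) (a : Fin n → ℕ) (v : List ℕ) : Prop :=
  List.Perm (colform v) (conjParts n a)

/-- The column word `col(T)` of a filling `T` (columns top to bottom, left to right),
with the `Fin n`-encoded entries converted to the 1-based letters. -/
def colWordT {n : ℕ} {c : Fin n → ℕ} (T : Filling n n c) : List ℕ :=
  (List.range (Finset.univ.sup c)).flatMap (fun j =>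
    ((List.finRange n).reverse).filterMap (fun i =>
      if h : j < c i then some ((T ⟨i, ⟨j, h⟩⟩ : ℕ) + 1) else none))

/-- The number of entries in column `j+1` of `key(a)`. -/
noncomputable def keyColCard (n : ℕ) (a : Fin n → ℕ) (j : ℕ) : ℕ :=
  (Finset.univ.filter (fun i : Fin n => j + 1 ≤ a i)).card

/-- The set of (1-based) entries in column `j+1` of `key(a)`. -/
noncomputable def keyColFinset (n : ℕ) (a : Fin n → ℕ) (j : ℕ) : Finset ℕ :=
  (Finset.univ.filter (fun i : Fin n => j + 1 ≤ a i)).image (fun i => (i : ℕ) + 1)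

/-- `K₋(T) = key(a)`: for each column `j` of `key(a)`, there is a column-frank word
Knuth equivalent to `col(T)` whose first subword has length `λ'_j` and whose first
subword's set of letters is the entry set of column `j` of `key(a)`. -/
def LeftKeyEq (n : ℕ) (a : Fin n → ℕ) {c : Fin n → ℕ} (T : Filling n n c) : Prop :=
  ∀ j < maxPart n a, ∃ v : List ℕ,
    Knuth v (colWordT T) ∧ ColumnFrank n a v ∧
    (firstRun v).length = keyColCard n a j ∧
    (firstRun v).toFinset = keyColFinset n a j

/-- `K₋(T) ≥ key(a)` entrywise. -/
def LeftKeyGe (n : ℕ) (a : Fin n → ℕ) {c : Fin n → ℕ} (T : Filling n n c) : Prop :=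
  ∀ j < maxPart n a, ∃ v : List ℕ,
    Knuth v (colWordT T) ∧ ColumnFrank n a v ∧
    (firstRun v).length = keyColCard n a j ∧
    List.Forall₂ (fun p q => q ≤ p) (((firstRun v).toFinset).sort (· ≤ ·))
      ((keyColFinset n a j).sort (· ≤ ·))

/-- `sort(a)`: the weakly decreasing rearrangement of `a`. -/
noncomputable def sortDesc (n : ℕ) (a : Fin n → ℕ) : Fin n → ℕ :=
  fun i => (a ∘ Tuple.sort a) i.rev

/-- The word consisting of `a_1` copies of `1`, then `a_2` copies of `2`, etc. -/
def bword (n : ℕ) (a : Fin n → ℕ) : List ℕ :=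
  (List.finRange n).flatMap (fun i => List.replicate (a i) ((i : ℕ) + 1))

/-! ### Divided differences and permutations -/

/-- The variable `x_i` (1-based); junk value `0` out of range. -/
noncomputable def xvar (n : ℕ) (i : ℕ) : MvPolynomial (Fin n) ℤ :=
  if h : 1 ≤ i ∧ i ≤ n then X (⟨i - 1, by omega⟩ : Fin n) else 0

/-- `s_i(f)`: exchange the variables `x_i` and `x_{i+1}` (1-based). -/
noncomputable def swapVars (n : ℕ) (i : ℕ) (f : MvPolynomial (Fin n) ℤ) :
    MvPolynomial (Fin n) ℤ :=
  if h : 1 ≤ i ∧ i < n then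
    rename (Equiv.swap (⟨i - 1, by omega⟩ : Fin n) (⟨i, h.2⟩ : Fin n)) f
  else f

/-- The divided difference `∂_i(f)`: the unique polynomial `g` with
`(x_i - x_{i+1}) * g = f - s_i(f)`. -/
noncomputable def ddiff (n : ℕ) (i : ℕ) (f : MvPolynomial (Fin n) ℤ) :
    MvPolynomial (Fin n) ℤ :=
  if h : ∃ g, (xvar n i - xvar n (i + 1)) * g = f - swapVars n i f then h.choose else 0

/-- `π_i(f) = ∂_i(x_i f)`. -/
noncomputable def piOp (n : ℕ) (i : ℕ) (f : MvPolynomial (Fin n) ℤ) :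
    MvPolynomial (Fin n) ℤ :=
  ddiff n i (xvar n i * f)

/-- `π̂_i(f) = -∂_i(x_{i+1} f)`. -/
noncomputable def piHat (n : ℕ) (i : ℕ) (f : MvPolynomial (Fin n) ℤ) :
    MvPolynomial (Fin n) ℤ :=
  - ddiff n i (xvar n (i + 1) * f)

/-- The automorphism `I` of `ℤ[x_1,…,x_n]` with `I(x_j) = x_{n+1-j}`. -/
noncomputable def Iauto (n : ℕ) (f : MvPolynomial (Fin n) ℤ) : MvPolynomial (Fin n) ℤ :=
  rename Fin.rev f

/-- The adjacent transposition `s_i = (i, i+1)` (1-based) of `Fin n`. -/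
def adjSwap (n : ℕ) (i : ℕ) : Equiv.Perm (Fin n) :=
  if h : 1 ≤ i ∧ i < n then Equiv.swap (⟨i - 1, by omega⟩ : Fin n) (⟨i, h.2⟩ : Fin n) else 1

/-- The permutation `s_{i_1} s_{i_2} ⋯ s_{i_r}` determined by a word of 1-based indices,
composed so that `w(m) = s_{i_1}(s_{i_2}(⋯ s_{i_r}(m)⋯))`. -/
def wordPerm (n : ℕ) (l : List ℕ) : Equiv.Perm (Fin n) := (l.map (adjSwap n)).prod

/-- The (Coxeter) length of a permutation: the minimal length of a word of adjacent
transpositions expressing it. -/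
noncomputable def permLen (n : ℕ) (w : Equiv.Perm (Fin n)) : ℕ :=
  sInf {r : ℕ | ∃ l : List ℕ, (∀ i ∈ l, 1 ≤ i ∧ i < n) ∧ wordPerm n l = w ∧ l.length = r}

/-- `l` is a reduced word for `w` (1-based letters). -/
def IsReducedWord (n : ℕ) (w : Equiv.Perm (Fin n)) (l : List ℕ) : Prop :=
  (∀ i ∈ l, 1 ≤ i ∧ i < n) ∧ wordPerm n l = w ∧ l.length = permLen n w


section Sol

open Finset

/-- The type of boxes of a diagram. -/
abbrev SBox {m : ℕ} (c : Fin m → ℕ) := (i : Fin m) × Fin (c i)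

/-- The weight of a filling, as a finitely supported function. -/
noncomputable def wtF {m n : ℕ} {c : Fin m → ℕ} (T : Filling m n c) : Fin n →₀ ℕ :=
  ∑ b : SBox c, Finsupp.single (T b) 1

lemma wtF_apply {m n : ℕ} {c : Fin m → ℕ} (T : Filling m n c) (v : Fin n) :
    wtF T v = (Finset.univ.filter (fun b : SBox c => T b = v)).card := by
  classical
  rw [wtF, Finsupp.finset_sum_apply, Finset.card_filter]
  exact Finset.sum_congr rfl fun b _ => by rw [Finsupp.single_apply]; congr

lemma prod_monomial_one {n : ℕ} {α : Type*} (s : Finset α) (f : α → (Fin n →₀ ℕ)) :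
    (∏ b ∈ s, (monomial (f b) (1 : ℤ))) = monomial (∑ b ∈ s, f b) 1 := by
  classical
  induction s using Finset.induction_on with
  | empty => simp
  | insert x s h ih => rw [Finset.prod_insert h, Finset.sum_insert h, ih, monomial_mul, one_mul]

lemma fmono_eq {m n : ℕ} {c : Fin m → ℕ} (T : Filling m n c) :
    fmono T = monomial (wtF T) (1 : ℤ) := by
  rw [fmono, wtF, ← prod_monomial_one]
  exact Finset.prod_congr rfl fun b _ => by
    rw [← MvPolynomial.X_pow_eq_monomial, pow_one]

lemma coeff_genfun {m n : ℕ} (c : Fin m → ℕ) (P : Filling m n c → Prop) (w : Fin n →₀ ℕ) :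
    MvPolynomial.coeff w (genfun c P) =
      (((Finset.univ.filter P).filter (fun T => wtF T = w)).card : ℤ) := by
  classical
  rw [genfun, MvPolynomial.coeff_sum]
  simp only [fmono_eq, MvPolynomial.coeff_monomial]
  rw [Finset.sum_boole]

/-- The trivial filling: every box is filled with its row index. -/
def trivF {n : ℕ} (c : Fin n → ℕ) : Filling n n c := fun b => b.1

lemma card_row {n : ℕ} (c : Fin n → ℕ) (v : Fin n) :
    (Finset.univ.filter (fun b : SBox c => b.1 = v)).card = c v := by
  classical
  rw [Finset.card_filter, ← Finset.univ_sigma_univ, Finset.sum_sigma]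
  simp [apply_ite Finset.card, Finset.sum_ite_eq']

lemma wtF_trivF {n : ℕ} (c : Fin n → ℕ) (v : Fin n) : wtF (trivF c) v = c v := by
  classical
  rw [wtF_apply, ← card_row c v]
  congr 1
  exact Finset.filter_congr fun _ _ => Iff.rfl

lemma entry_le_row {n : ℕ} {c : Fin n → ℕ} {S : Filling n n c}
    (hd : RowsWeakDecr S) (hf : FirstEntryRowIndex S) (bx : SBox c) :
    (S bx : ℕ) ≤ (bx.1 : ℕ) := by
  obtain ⟨i, j⟩ := bx
  have pos : 0 < c i := Nat.lt_of_le_of_lt (Nat.zero_le _) j.isLt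
  have h := hd i ⟨0, pos⟩ j (by simp [Fin.le_def])
  rw [hf i pos] at h
  exact h

lemma row_le_entry {n : ℕ} {c : Fin n → ℕ} {T : Filling n n c}
    (hi : RowsWeakIncr T) (hf : FirstEntryRowIndex T) (bx : SBox c) :
    (bx.1 : ℕ) ≤ (T bx : ℕ) := by
  obtain ⟨i, j⟩ := bx
  have pos : 0 < c i := Nat.lt_of_le_of_lt (Nat.zero_le _) j.isLt
  have h := hi i ⟨0, pos⟩ j (by simp [Fin.le_def])
  rw [hf i pos] at h
  exact h

noncomputable def ecnt {n : ℕ} {c : Fin n → ℕ} (T : Filling n n c) (m : ℕ) : ℕ :=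
  (Finset.univ.filter (fun bx : SBox c => (T bx : ℕ) ≤ m)).card

lemma ecnt_eq_sum {n : ℕ} {c : Fin n → ℕ} (T : Filling n n c) (m : ℕ) :
    ecnt T m = ∑ v ∈ Finset.univ.filter (fun v : Fin n => (v : ℕ) ≤ m), wtF T v := by
  classical
  rw [ecnt, Finset.card_eq_sum_card_fiberwise
    (f := fun bx => T bx) (t := Finset.univ.filter (fun v : Fin n => (v : ℕ) ≤ m))
    (fun bx hbx => by
      simp only [Finset.mem_coe, Finset.mem_filter, Finset.mem_univ, true_and] at hbx ⊢; exact hbx)]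
  refine Finset.sum_congr rfl fun v hv => ?_
  rw [wtF_apply]
  congr 1
  ext bx
  simp only [Finset.mem_filter, Finset.mem_univ, true_and]
  constructor
  · rintro ⟨-, h2⟩; exact h2
  · intro h2
    exact ⟨by rw [h2]; exact (Finset.mem_filter.mp hv).2, h2⟩

lemma ecnt_congr {n : ℕ} {c c' : Fin n → ℕ} {T : Filling n n c} {T' : Filling n n c'}
    (h : wtF T = wtF T') (m : ℕ) : ecnt T m = ecnt T' m := by
  rw [ecnt_eq_sum, ecnt_eq_sum, h]

lemma ecnt_trivF_le {n : ℕ} {c : Fin n → ℕ} {S : Filling n n c}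
    (hd : RowsWeakDecr S) (hf : FirstEntryRowIndex S) (m : ℕ) :
    ecnt (trivF c) m ≤ ecnt S m := by
  classical
  refine Finset.card_le_card fun bx hbx => ?_
  simp only [Finset.mem_filter, Finset.mem_univ, true_and] at hbx ⊢
  exact le_trans (entry_le_row hd hf bx) hbx

lemma ecnt_le_trivF {n : ℕ} {c : Fin n → ℕ} {T : Filling n n c}
    (hi : RowsWeakIncr T) (hf : FirstEntryRowIndex T) (m : ℕ) :
    ecnt T m ≤ ecnt (trivF c) m := by
  classical
  refine Finset.card_le_card fun bx hbx => ?_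
  simp only [Finset.mem_filter, Finset.mem_univ, true_and] at hbx ⊢
  exact le_trans (row_le_entry hi hf bx) hbx

end Sol
section Sol2

open Finset

lemma extractA {n : ℕ} {b : Fin n → ℕ} {S : Filling n n b}
    (hd : RowsWeakDecr S) (hc : ColumnsDistinct S) (hf : FirstEntryRowIndex S)
    (ht : TriplesAB S) (hnt : ∃ bx : SBox b, S bx ≠ bx.1) :
    ∃ bx : SBox b, S bx ≠ bx.1 ∧ 1 ≤ (bx.2 : ℕ) ∧
      (∀ bx' : SBox b, (bx'.2 : ℕ) < (bx.2 : ℕ) → S bx' = bx'.1) ∧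
      b (S bx) ≤ (bx.2 : ℕ) ∧
      (∀ p : Fin n, S bx ≤ p → p < bx.1 → b p ≠ (bx.2 : ℕ)) := by
  classical
  set N := Finset.univ.filter (fun bx : SBox b => S bx ≠ bx.1) with hN
  have hNne : N.Nonempty := by
    obtain ⟨bx, hbx⟩ := hnt
    exact ⟨bx, by simp [hN, hbx]⟩
  obtain ⟨bx₀, hbx₀, hmin₀⟩ := Finset.exists_min_image N (fun bx => (bx.2 : ℕ)) hNne
  have hMne : (N.filter (fun bx => (bx.2 : ℕ) = (bx₀.2 : ℕ))).Nonempty :=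
    ⟨bx₀, by simp [hbx₀]⟩
  obtain ⟨bx, hbxM, hminv⟩ := Finset.exists_min_image _ (fun bx => (S bx : ℕ)) hMne
  obtain ⟨hbxN, hbxj⟩ := Finset.mem_filter.mp hbxM
  have hbxnt : S bx ≠ bx.1 := (Finset.mem_filter.mp hbxN).2
  -- everything strictly left of column bx.2 is trivial
  have hTriv : ∀ bx' : SBox b, (bx'.2 : ℕ) < (bx.2 : ℕ) → S bx' = bx'.1 := by
    intro bx' hlt
    by_contra hne
    have hmem : bx' ∈ N := Finset.mem_filter.mpr ⟨Finset.mem_univ _, hne⟩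
    have h0 := hmin₀ bx' hmem
    omega
  have hvlt : (S bx : ℕ) < (bx.1 : ℕ) :=
    lt_of_le_of_ne (entry_le_row hd hf bx) (fun h => hbxnt (Fin.ext h))
  have h1j : 1 ≤ (bx.2 : ℕ) := by
    by_contra h0
    have pos : 0 < b bx.1 := Nat.lt_of_le_of_lt (Nat.zero_le _) bx.2.isLt
    have hfe := hf bx.1 pos
    have hbb : (⟨bx.1, ⟨0, pos⟩⟩ : SBox b) = bx :=
      congrArg (fun z => (⟨bx.1, z⟩ : SBox b)) (Fin.ext (by simp; omega))
    rw [hbb] at hfe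
    exact hbxnt hfe
  have hbv : b (S bx) ≤ (bx.2 : ℕ) := by
    by_contra hgt
    push_neg at hgt
    have hvne : S bx ≠ bx.1 := hbxnt
    have hcd := hc (S bx) bx.1 (fun h => hvne (by rw [h]))
      ⟨(bx.2 : ℕ), hgt⟩ bx.2 rfl
    have hle : (S ⟨S bx, ⟨(bx.2 : ℕ), hgt⟩⟩ : ℕ) ≤ ((S bx : Fin n) : ℕ) :=
      entry_le_row hd hf _
    have hlt2 : (S ⟨S bx, ⟨(bx.2 : ℕ), hgt⟩⟩ : ℕ) < ((S bx : Fin n) : ℕ) :=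
      lt_of_le_of_ne hle (fun h => hcd (Fin.ext h))
    have hmem : (⟨S bx, ⟨(bx.2 : ℕ), hgt⟩⟩ : SBox b) ∈
        N.filter (fun bx' => (bx'.2 : ℕ) = (bx₀.2 : ℕ)) := by
      refine Finset.mem_filter.mpr ⟨Finset.mem_filter.mpr ⟨Finset.mem_univ _, ?_⟩, ?_⟩
      · intro h
        have := congrArg (fun z : Fin n => (z : ℕ)) h
        simp only at this
        omega
      · simpa using hbxj
    have := hminv _ hmem
    omega
  refine ⟨bx, hbxnt, h1j, hTriv, hbv, ?_⟩
  intro p hvp hpr hbp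
  obtain ⟨k, hk⟩ : ∃ k, (bx.2 : ℕ) = k + 1 := ⟨(bx.2 : ℕ) - 1, by omega⟩
  have hklt : k + 1 < b bx.1 := by
    have := bx.2.isLt
    omega
  have h2 : k < b p := by omega
  have hclt : b p < b bx.1 := by
    have := bx.2.isLt
    omega
  have htr := ht.2 p bx.1 hpr hclt k hklt h2
  apply htr
  constructor
  · rw [hTriv ⟨p, ⟨k, h2⟩⟩ (by simp; omega),
        hTriv ⟨bx.1, ⟨k, Nat.lt_of_succ_lt hklt⟩⟩ (by simp; omega)]
    exact le_of_lt hpr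
  · have hbb : (⟨bx.1, ⟨k + 1, hklt⟩⟩ : SBox b) = bx :=
      congrArg (fun z => (⟨bx.1, z⟩ : SBox b)) (Fin.ext (by simp; omega))
    rw [hbb, hTriv ⟨p, ⟨k, h2⟩⟩ (by simp; omega)]
    exact hvp

lemma extractY {n : ℕ} {a : Fin n → ℕ} {T : Filling n n a}
    (hi : RowsWeakIncr T) (hc : ColumnsDistinct T) (hf : FirstEntryRowIndex T)
    (ht : TriplesYoung T) (hnt : ∃ bx : SBox a, T bx ≠ bx.1) :
    ∃ bx : SBox a, T bx ≠ bx.1 ∧ 1 ≤ (bx.2 : ℕ) ∧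
      (∀ bx' : SBox a, (bx'.2 : ℕ) < (bx.2 : ℕ) → T bx' = bx'.1) ∧
      a (T bx) ≤ (bx.2 : ℕ) ∧
      (∀ p : Fin n, bx.1 < p → p ≤ T bx → a p ≠ (bx.2 : ℕ)) := by
  classical
  set N := Finset.univ.filter (fun bx : SBox a => T bx ≠ bx.1) with hN
  have hNne : N.Nonempty := by
    obtain ⟨bx, hbx⟩ := hnt
    exact ⟨bx, by simp [hN, hbx]⟩
  obtain ⟨bx₀, hbx₀, hmin₀⟩ := Finset.exists_min_image N (fun bx => (bx.2 : ℕ)) hNne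
  have hMne : (N.filter (fun bx => (bx.2 : ℕ) = (bx₀.2 : ℕ))).Nonempty :=
    ⟨bx₀, by simp [hbx₀]⟩
  obtain ⟨bx, hbxM, hmaxv⟩ := Finset.exists_max_image _ (fun bx => (T bx : ℕ)) hMne
  obtain ⟨hbxN, hbxj⟩ := Finset.mem_filter.mp hbxM
  have hbxnt : T bx ≠ bx.1 := (Finset.mem_filter.mp hbxN).2
  have hTriv : ∀ bx' : SBox a, (bx'.2 : ℕ) < (bx.2 : ℕ) → T bx' = bx'.1 := by
    intro bx' hlt
    by_contra hne
    have hmem : bx' ∈ N := Finset.mem_filter.mpr ⟨Finset.mem_univ _, hne⟩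
    have h0 := hmin₀ bx' hmem
    omega
  have hvlt : (bx.1 : ℕ) < (T bx : ℕ) :=
    lt_of_le_of_ne (row_le_entry hi hf bx) (fun h => hbxnt (Fin.ext h.symm))
  have h1j : 1 ≤ (bx.2 : ℕ) := by
    by_contra h0
    have pos : 0 < a bx.1 := Nat.lt_of_le_of_lt (Nat.zero_le _) bx.2.isLt
    have hfe := hf bx.1 pos
    have hbb : (⟨bx.1, ⟨0, pos⟩⟩ : SBox a) = bx :=
      congrArg (fun z => (⟨bx.1, z⟩ : SBox a)) (Fin.ext (by simp; omega))
    rw [hbb] at hfe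
    exact hbxnt hfe
  have hbv : a (T bx) ≤ (bx.2 : ℕ) := by
    by_contra hgt
    push_neg at hgt
    have hcd := hc (T bx) bx.1 (fun h => hbxnt (by rw [h]))
      ⟨(bx.2 : ℕ), hgt⟩ bx.2 rfl
    have hle : ((T bx : Fin n) : ℕ) ≤ (T ⟨T bx, ⟨(bx.2 : ℕ), hgt⟩⟩ : ℕ) :=
      row_le_entry hi hf ⟨T bx, ⟨(bx.2 : ℕ), hgt⟩⟩
    have hlt2 : ((T bx : Fin n) : ℕ) < (T ⟨T bx, ⟨(bx.2 : ℕ), hgt⟩⟩ : ℕ) :=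
      lt_of_le_of_ne hle (fun h => hcd (Fin.ext h.symm))
    have hmem : (⟨T bx, ⟨(bx.2 : ℕ), hgt⟩⟩ : SBox a) ∈
        N.filter (fun bx' => (bx'.2 : ℕ) = (bx₀.2 : ℕ)) := by
      refine Finset.mem_filter.mpr ⟨Finset.mem_filter.mpr ⟨Finset.mem_univ _, ?_⟩, ?_⟩
      · intro h
        have := congrArg (fun z : Fin n => (z : ℕ)) h
        simp only at this
        omega
      · simpa using hbxj
    have := hmaxv _ hmem
    omega
  refine ⟨bx, hbxnt, h1j, hTriv, hbv, ?_⟩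
  intro p hrp hpv hap
  obtain ⟨k, hk⟩ : ∃ k, (bx.2 : ℕ) = k + 1 := ⟨(bx.2 : ℕ) - 1, by omega⟩
  have hklt : k + 1 < a bx.1 := by
    have := bx.2.isLt
    omega
  have h2 : k < a p := by omega
  have hclt : a p < a bx.1 := by
    have := bx.2.isLt
    omega
  have htr := ht.2 bx.1 p hrp hclt k hklt h2
  apply htr
  constructor
  · have hbb : (⟨bx.1, ⟨k + 1, hklt⟩⟩ : SBox a) = bx :=
      congrArg (fun z => (⟨bx.1, z⟩ : SBox a)) (Fin.ext (by simp; omega))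
    rw [hbb, hTriv ⟨p, ⟨k, h2⟩⟩ (by simp; omega)]
    exact hpv
  · rw [hTriv ⟨p, ⟨k, h2⟩⟩ (by simp; omega),
        hTriv ⟨bx.1, ⟨k, Nat.lt_of_succ_lt hklt⟩⟩ (by simp; omega)]
    exact le_of_lt hrp

end Sol2
section Sol3

open Finset

lemma trivF_A {n : ℕ} (c : Fin n → ℕ) :
    RowsWeakDecr (trivF c) ∧ ColumnsDistinct (trivF c) ∧
      FirstEntryRowIndex (trivF c) ∧ TriplesAB (trivF c) := by
  refine ⟨fun i j j' _ => le_refl _, fun i i' hne j j' _ h => hne h,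
    fun i h => rfl, ?_, ?_⟩
  · intro i i' hii' _ k h1 h2 hcon
    exact absurd hcon.1 (not_le.mpr hii')
  · intro i i' hii' _ k h1 h2 hcon
    exact absurd hcon.2 (not_le.mpr hii')

lemma trivF_Y {n : ℕ} (c : Fin n → ℕ) :
    RowsWeakIncr (trivF c) ∧ ColumnsDistinct (trivF c) ∧
      FirstEntryRowIndex (trivF c) ∧ TriplesYoung (trivF c) := by
  refine ⟨fun i j j' _ => le_refl _, fun i i' hne j j' _ h => hne h,
    fun i h => rfl, ?_, ?_⟩
  · intro i i' hii' _ k h1 h2 hcon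
    exact absurd hcon.2 (not_le.mpr hii')
  · intro i i' hii' _ k h1 h2 hcon
    exact absurd hcon.1 (not_le.mpr hii')

lemma trivOfNoAscent {n : ℕ} {b : Fin n → ℕ} {S : Filling n n b}
    (hd : RowsWeakDecr S) (hc : ColumnsDistinct S) (hf : FirstEntryRowIndex S)
    (ht : TriplesAB S)
    (hasc : ∀ (i : ℕ) (h : i + 1 < n), b ⟨i + 1, h⟩ ≤ b ⟨i, Nat.lt_of_succ_lt h⟩ + 1) :
    ∀ bx : SBox b, S bx = bx.1 := by
  by_contra hne
  push_neg at hne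
  obtain ⟨bx, hbx1, hbx2, hTriv, hbv, hpcl⟩ := extractA hd hc hf ht hne
  have hvlt : (S bx : ℕ) < (bx.1 : ℕ) :=
    lt_of_le_of_ne (entry_le_row hd hf bx) (fun h => hbx1 (Fin.ext h))
  have key : ∀ m, ((S bx : Fin n) : ℕ) ≤ m →
      ∀ (hmn : m < n), m ≤ (bx.1 : ℕ) → b ⟨m, hmn⟩ ≤ (bx.2 : ℕ) := by
    refine Nat.le_induction ?_ ?_
    · intro hmn _
      have he : (⟨((S bx : Fin n) : ℕ), hmn⟩ : Fin n) = S bx := Fin.ext rfl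
      rw [he]
      exact hbv
    · intro m hvm IH hmn hm1r
      have hmn' : m < n := by omega
      have hmr : m ≤ (bx.1 : ℕ) := by omega
      have h1 : b ⟨m, hmn'⟩ ≤ (bx.2 : ℕ) := IH hmn' hmr
      have h2 : b ⟨m + 1, hmn⟩ ≤ b ⟨m, hmn'⟩ + 1 := hasc m hmn
      by_contra hgt
      push_neg at hgt
      have hbm : b ⟨m, hmn'⟩ = (bx.2 : ℕ) := by omega
      exact hpcl ⟨m, hmn'⟩ (by rw [Fin.le_def]; exact hvm)
        (by rw [Fin.lt_def]; simp; omega) hbm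
  have hfin := key (bx.1 : ℕ) (le_of_lt hvlt) bx.1.isLt (le_refl _)
  have he : (⟨(bx.1 : ℕ), bx.1.isLt⟩ : Fin n) = bx.1 := Fin.ext rfl
  rw [he] at hfin
  have := bx.2.isLt
  omega

lemma trivOfNoDescent {n : ℕ} {a : Fin n → ℕ} {T : Filling n n a}
    (hi : RowsWeakIncr T) (hc : ColumnsDistinct T) (hf : FirstEntryRowIndex T)
    (ht : TriplesYoung T)
    (hdes : ∀ (i : ℕ) (h : i + 1 < n), a ⟨i, Nat.lt_of_succ_lt h⟩ ≤ a ⟨i + 1, h⟩ + 1) :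
    ∀ bx : SBox a, T bx = bx.1 := by
  by_contra hne
  push_neg at hne
  obtain ⟨bx, hbx1, hbx2, hTriv, hbv, hpcl⟩ := extractY hi hc hf ht hne
  have hvgt : (bx.1 : ℕ) < (T bx : ℕ) :=
    lt_of_le_of_ne (row_le_entry hi hf bx) (fun h => hbx1 (Fin.ext h.symm))
  have key : ∀ d m (hmn : m < n), m + d = ((T bx : Fin n) : ℕ) →
      (bx.1 : ℕ) ≤ m → a ⟨m, hmn⟩ ≤ (bx.2 : ℕ) := by
    intro d
    induction d with
    | zero =>
      intro m hmn hsum hr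
      have hm : m = ((T bx : Fin n) : ℕ) := by omega
      subst hm
      have he : (⟨((T bx : Fin n) : ℕ), hmn⟩ : Fin n) = T bx := Fin.ext rfl
      rw [he]
      exact hbv
    | succ d IH =>
      intro m hmn hsum hr
      have hm1n : m + 1 < n := by
        have := (T bx).isLt
        omega
      have h1 : a ⟨m + 1, hm1n⟩ ≤ (bx.2 : ℕ) := IH (m + 1) hm1n (by omega) (by omega)
      have h2 : a ⟨m, hmn⟩ ≤ a ⟨m + 1, hm1n⟩ + 1 := hdes m hm1n
      by_contra hgt
      push_neg at hgt
      have ham : a ⟨m + 1, hm1n⟩ = (bx.2 : ℕ) := by omega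
      exact hpcl ⟨m + 1, hm1n⟩ (by rw [Fin.lt_def]; simp; omega)
        (by rw [Fin.le_def]; simp; omega) ham
  have hfin := key (((T bx : Fin n) : ℕ) - (bx.1 : ℕ)) (bx.1 : ℕ) bx.1.isLt
    (by omega) (le_refl _)
  have he : (⟨(bx.1 : ℕ), bx.1.isLt⟩ : Fin n) = bx.1 := Fin.ext rfl
  rw [he] at hfin
  have := bx.2.isLt
  omega

end Sol3
section Sol4

open Finset

lemma wtF_eq_shape {n : ℕ} {b : Fin n → ℕ} {S : Filling n n b}
    (h : ∀ bx : SBox b, S bx = bx.1) (v : Fin n) : wtF S v = b v := by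
  classical
  rw [wtF_apply, ← card_row b v]
  congr 1
  refine Finset.filter_congr fun bx _ => ?_
  rw [h bx]

lemma weights_eq {n : ℕ} {a b : Fin n → ℕ} {S : Filling n n b} {T : Filling n n a}
    (hSd : RowsWeakDecr S) (hSc : ColumnsDistinct S) (hSf : FirstEntryRowIndex S)
    (hSt : TriplesAB S) (hSw : ∀ v, wtF S v = a v)
    (hTi : RowsWeakIncr T) (hTc : ColumnsDistinct T) (hTf : FirstEntryRowIndex T)
    (hTt : TriplesYoung T) (hTw : ∀ v, wtF T v = b v) : a = b := by
  classical
  by_contra hab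
  have hSnt : ∃ bx : SBox b, S bx ≠ bx.1 := by
    by_contra h
    push_neg at h
    exact hab (funext fun v => by rw [← hSw v, wtF_eq_shape h])
  have hTnt : ∃ bx : SBox a, T bx ≠ bx.1 := by
    by_contra h
    push_neg at h
    exact hab (funext fun v => by rw [← hTw v, wtF_eq_shape h])
  obtain ⟨bS, hS1, hS2, hStriv, hSbv, hSp⟩ := extractA hSd hSc hSf hSt hSnt
  obtain ⟨bT, hT1, hT2, hTtriv, hTav, hTp⟩ := extractY hTi hTc hTf hTt hTnt
  have hvSlt : ((S bS : Fin n) : ℕ) < (bS.1 : ℕ) :=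
    lt_of_le_of_ne (entry_le_row hSd hSf bS) (fun h => hS1 (Fin.ext h))
  have hvTgt : (bT.1 : ℕ) < ((T bT : Fin n) : ℕ) :=
    lt_of_le_of_ne (row_le_entry hTi hTf bT) (fun h => hT1 (Fin.ext h.symm))
  have hSbv' : b (S bS) < (bS.2 : ℕ) :=
    lt_of_le_of_ne hSbv (hSp (S bS) (le_refl _) (by rw [Fin.lt_def]; exact hvSlt))
  have hTav' : a (T bT) < (bT.2 : ℕ) :=
    lt_of_le_of_ne hTav (hTp (T bT) (by rw [Fin.lt_def]; exact hvTgt) (le_refl _))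
  -- first counting fact : b vS + 1 ≤ a vS
  have count1 : b (S bS) + 1 ≤ a (S bS) := by
    rw [← hSw (S bS), wtF_apply]
    have hcard : (Finset.univ : Finset (Fin (b (S bS) + 1))).card = b (S bS) + 1 := by
      simp
    rw [← hcard]
    refine Finset.card_le_card_of_injOn
      (fun t => if h : (t : ℕ) < b (S bS) then (⟨S bS, ⟨(t : ℕ), h⟩⟩ : SBox b) else bS)
      (fun t _ => ?_) (fun t _ t' _ heq => ?_)
    · dsimp only
      by_cases h : (t : ℕ) < b (S bS)
      · rw [dif_pos h]
        rw [Finset.mem_coe, Finset.mem_filter]; refine ⟨Finset.mem_univ _, ?_⟩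
        exact hStriv ⟨S bS, ⟨(t : ℕ), h⟩⟩ (by simp; omega)
      · rw [dif_neg h]
        rw [Finset.mem_coe, Finset.mem_filter]; exact ⟨Finset.mem_univ _, rfl⟩
    · dsimp only at heq
      by_cases h : (t : ℕ) < b (S bS) <;> by_cases h' : (t' : ℕ) < b (S bS)
      · rw [dif_pos h, dif_pos h'] at heq
        have h2 := congrArg (fun z : SBox b => (z.2 : ℕ)) heq
        dsimp only at h2
        exact Fin.ext h2
      · rw [dif_pos h, dif_neg h'] at heq
        have := congrArg (fun z : SBox b => (z.1 : ℕ)) heq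
        dsimp only at this
        omega
      · rw [dif_neg h, dif_pos h'] at heq
        have := congrArg (fun z : SBox b => (z.1 : ℕ)) heq
        dsimp only at this
        omega
      · have ht := t.isLt
        have ht' := t'.isLt
        exact Fin.ext (by omega)
  -- second counting fact : a vT + 1 ≤ b vT
  have count2 : a (T bT) + 1 ≤ b (T bT) := by
    rw [← hTw (T bT), wtF_apply]
    have hcard : (Finset.univ : Finset (Fin (a (T bT) + 1))).card = a (T bT) + 1 := by
      simp
    rw [← hcard]
    refine Finset.card_le_card_of_injOn
      (fun t => if h : (t : ℕ) < a (T bT) then (⟨T bT, ⟨(t : ℕ), h⟩⟩ : SBox a) else bT)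
      (fun t _ => ?_) (fun t _ t' _ heq => ?_)
    · dsimp only
      by_cases h : (t : ℕ) < a (T bT)
      · rw [dif_pos h]
        rw [Finset.mem_coe, Finset.mem_filter]; refine ⟨Finset.mem_univ _, ?_⟩
        exact hTtriv ⟨T bT, ⟨(t : ℕ), h⟩⟩ (by simp; omega)
      · rw [dif_neg h]
        rw [Finset.mem_coe, Finset.mem_filter]; exact ⟨Finset.mem_univ _, rfl⟩
    · dsimp only at heq
      by_cases h : (t : ℕ) < a (T bT) <;> by_cases h' : (t' : ℕ) < a (T bT)
      · rw [dif_pos h, dif_pos h'] at heq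
        have h2 := congrArg (fun z : SBox a => (z.2 : ℕ)) heq
        dsimp only at h2
        exact Fin.ext h2
      · rw [dif_pos h, dif_neg h'] at heq
        have := congrArg (fun z : SBox a => (z.1 : ℕ)) heq
        dsimp only at this
        omega
      · rw [dif_neg h, dif_pos h'] at heq
        have := congrArg (fun z : SBox a => (z.1 : ℕ)) heq
        dsimp only at this
        omega
      · have ht := t.isLt
        have ht' := t'.isLt
        exact Fin.ext (by omega)
  rcases le_total (bS.2 : ℕ) (bT.2 : ℕ) with hj | hj
  · -- min (a vS) jT ≤ b vS
    have hmin : min (a (S bS)) (bT.2 : ℕ) ≤ b (S bS) := by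
      rw [← hTw (S bS), wtF_apply]
      have hcard : (Finset.univ : Finset (Fin (min (a (S bS)) (bT.2 : ℕ)))).card =
          min (a (S bS)) (bT.2 : ℕ) := by simp
      rw [← hcard]
      refine Finset.card_le_card_of_injOn
        (fun t => (⟨S bS, ⟨(t : ℕ), lt_of_lt_of_le t.isLt (min_le_left _ _)⟩⟩ : SBox a))
        (fun t _ => ?_) (fun t _ t' _ heq => ?_)
      · dsimp only
        rw [Finset.mem_coe, Finset.mem_filter]; refine ⟨Finset.mem_univ _, ?_⟩
        refine hTtriv _ ?_
        simp only
        have := t.isLt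
        omega
      · dsimp only at heq
        have h2 := congrArg (fun z : SBox a => (z.2 : ℕ)) heq
        dsimp only at h2
        exact Fin.ext h2
    omega
  · have hmin : min (b (T bT)) (bS.2 : ℕ) ≤ a (T bT) := by
      rw [← hSw (T bT), wtF_apply]
      have hcard : (Finset.univ : Finset (Fin (min (b (T bT)) (bS.2 : ℕ)))).card =
          min (b (T bT)) (bS.2 : ℕ) := by simp
      rw [← hcard]
      refine Finset.card_le_card_of_injOn
        (fun t => (⟨T bT, ⟨(t : ℕ), lt_of_lt_of_le t.isLt (min_le_left _ _)⟩⟩ : SBox b))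
        (fun t _ => ?_) (fun t _ t' _ heq => ?_)
      · dsimp only
        rw [Finset.mem_coe, Finset.mem_filter]; refine ⟨Finset.mem_univ _, ?_⟩
        refine hStriv _ ?_
        simp only
        have := t.isLt
        omega
      · dsimp only at heq
        have h2 := congrArg (fun z : SBox b => (z.2 : ℕ)) heq
        dsimp only at h2
        exact Fin.ext h2
    omega

end Sol4
section Sol5

open Finset

lemma raiseMk {n : ℕ} (a : Fin n → ℕ) (r : ℕ) (hr : r + 1 < n) (hr0 : r < n)
    (hbig : a ⟨r + 1, hr⟩ + 2 ≤ a ⟨r, hr0⟩) :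
    ∃ T : Filling n n a,
      (RowsWeakIncr T ∧ ColumnsDistinct T ∧ FirstEntryRowIndex T ∧ TriplesYoung T) ∧
      ecnt T r + 1 = ecnt (trivF a) r := by
  classical
  obtain ⟨rf, hrfv⟩ : ∃ z : Fin n, (z : ℕ) = r := ⟨⟨r, by omega⟩, rfl⟩
  obtain ⟨rf1, hrf1v⟩ : ∃ z : Fin n, (z : ℕ) = r + 1 := ⟨⟨r + 1, hr⟩, rfl⟩
  have e1 : (⟨r + 1, hr⟩ : Fin n) = rf1 := Fin.ext hrf1v.symm
  have e2 : (⟨r, hr0⟩ : Fin n) = rf := Fin.ext hrfv.symm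
  rw [e1, e2] at hbig
  obtain ⟨m, ha⟩ : ∃ m, a rf = m + 1 := ⟨a rf - 1, by omega⟩
  have hb : a rf1 + 1 ≤ m := by omega
  refine ⟨fun bx => if (bx.1 : ℕ) = r ∧ (bx.2 : ℕ) = m then rf1 else bx.1, ?_⟩
  set T : Filling n n a :=
    (fun bx => if (bx.1 : ℕ) = r ∧ (bx.2 : ℕ) = m then rf1 else bx.1) with hT
  have hvn : ∀ bx : SBox a, ¬((bx.1 : ℕ) = r ∧ (bx.2 : ℕ) = m) → T bx = bx.1 := by
    intro bx h
    simp only [hT, if_neg h]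
  have hvs : ∀ bx : SBox a, (bx.1 : ℕ) = r ∧ (bx.2 : ℕ) = m → T bx = rf1 := by
    intro bx h
    simp only [hT, if_pos h]
  have hvn' : ∀ (i : Fin n) (j : Fin (a i)), ¬((i : ℕ) = r ∧ (j : ℕ) = m) →
      T ⟨i, j⟩ = i := fun i j h => hvn ⟨i, j⟩ h
  have hvs' : ∀ (i : Fin n) (j : Fin (a i)), (i : ℕ) = r ∧ (j : ℕ) = m →
      T ⟨i, j⟩ = rf1 := fun i j h => hvs ⟨i, j⟩ h
  have hrow : ∀ i : Fin n, (i : ℕ) = r → a i = m + 1 := by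
    intro i h
    have : i = rf := Fin.ext (by omega)
    rw [this, ha]
  constructor
  · refine ⟨?_, ?_, ?_, ?_, ?_⟩
    · -- RowsWeakIncr
      intro i j j' hjj'
      rw [Fin.le_def] at hjj' ⊢
      by_cases h1 : (i : ℕ) = r ∧ (j : ℕ) = m
      · by_cases h2 : (i : ℕ) = r ∧ (j' : ℕ) = m
        · rw [hvs' i j h1, hvs' i j' h2]
        · exfalso
          have hai : a i = m + 1 := hrow i h1.1
          have := j'.isLt
          exact h2 ⟨h1.1, by omega⟩
      · rw [hvn' i j h1]
        by_cases h2 : (i : ℕ) = r ∧ (j' : ℕ) = m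
        · rw [hvs' i j' h2]
          omega
        · rw [hvn' i j' h2]
    · -- ColumnsDistinct
      intro i i' hne j j' hcc heq
      apply hne
      by_cases h1 : (i : ℕ) = r ∧ (j : ℕ) = m
      · rw [hvs' i j h1] at heq
        by_cases h2 : (i' : ℕ) = r ∧ (j' : ℕ) = m
        · exact Fin.ext (by omega)
        · exfalso
          rw [hvn' i' j' h2] at heq
          have ei : i' = rf1 := heq.symm
          have h3 : (j' : ℕ) < a rf1 := by rw [← ei]; exact j'.isLt
          omega
      · rw [hvn' i j h1] at heq
        by_cases h2 : (i' : ℕ) = r ∧ (j' : ℕ) = m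
        · exfalso
          rw [hvs' i' j' h2] at heq
          have ei : i = rf1 := heq
          have h3 : (j : ℕ) < a rf1 := by rw [← ei]; exact j.isLt
          omega
        · rw [hvn' i' j' h2] at heq
          exact heq
    · -- FirstEntryRowIndex
      intro i h
      refine hvn' i ⟨0,h⟩ ?_
      simp only
      omega
    · -- Type I triples
      intro i i' hii' hcc k h1 h2 hcon
      obtain ⟨c1, c2⟩ := hcon
      rw [Fin.lt_def] at hii'
      rw [Fin.le_def] at c1 c2
      by_cases hB1 : (i : ℕ) = r ∧ (k + 1 : ℕ) = m
      · rw [hvs' i ⟨k + 1,h2⟩ (by simpa using hB1)] at c1 c2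
        have hB2 : ¬((i' : ℕ) = r ∧ (k + 1 : ℕ) = m) := by omega
        have hB3 : ¬((i' : ℕ) = r ∧ (k : ℕ) = m) := by omega
        rw [hvn' i' ⟨k + 1,h1⟩ (by simpa using hB2)] at c1
        rw [hvn' i' ⟨k,Nat.lt_of_succ_lt h1⟩ (by simpa using hB3)] at c2
        have hi' : i' = rf1 := Fin.ext (by omega)
        have h4 : k + 1 < a rf1 := by rw [← hi']; exact h1
        omega
      · rw [hvn' i ⟨k + 1,h2⟩ (by simpa using hB1)] at c1 c2
        by_cases hB3 : (i' : ℕ) = r ∧ (k : ℕ) = m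
        · rw [hvs' i' ⟨k,Nat.lt_of_succ_lt h1⟩ (by simpa using hB3)] at c2
          omega
        · rw [hvn' i' ⟨k,Nat.lt_of_succ_lt h1⟩ (by simpa using hB3)] at c2
          omega
    · -- Type II triples
      intro i i' hii' hcc k h1 h2 hcon
      obtain ⟨c1, c2⟩ := hcon
      rw [Fin.lt_def] at hii'
      rw [Fin.le_def] at c1 c2
      by_cases hB2 : (i : ℕ) = r ∧ (k + 1 : ℕ) = m
      · rw [hvs' i ⟨k + 1,h1⟩ (by simpa using hB2)] at c1
        have hB1 : ¬((i' : ℕ) = r ∧ (k : ℕ) = m) := by omega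
        rw [hvn' i' ⟨k,h2⟩ (by simpa using hB1)] at c1 c2
        have hi' : i' = rf1 := Fin.ext (by omega)
        have h4 : k < a rf1 := by rw [← hi']; exact h2
        omega
      · rw [hvn' i ⟨k + 1,h1⟩ (by simpa using hB2)] at c1
        by_cases hB1 : (i' : ℕ) = r ∧ (k : ℕ) = m
        · rw [hvs' i' ⟨k,h2⟩ (by simpa using hB1)] at c1
          omega
        · rw [hvn' i' ⟨k,h2⟩ (by simpa using hB1)] at c1
          omega
  · -- counting
    have hx₀lt : m < a rf := by omega
    have hset : Finset.univ.filter (fun bx : SBox a => (T bx : ℕ) ≤ r) =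
        (Finset.univ.filter (fun bx : SBox a => (trivF a bx : ℕ) ≤ r)).erase
          ⟨rf, ⟨m, hx₀lt⟩⟩ := by
      ext bx
      simp only [Finset.mem_erase, Finset.mem_filter, Finset.mem_univ, true_and, trivF]
      constructor
      · intro hbx
        by_cases hsp : (bx.1 : ℕ) = r ∧ (bx.2 : ℕ) = m
        · rw [hvs bx hsp] at hbx
          omega
        · rw [hvn bx hsp] at hbx
          refine ⟨?_, Finset.mem_filter.mpr ⟨Finset.mem_univ _, hbx⟩⟩
          intro hbe
          rw [hbe] at hsp
          exact hsp ⟨by simpa using hrfv, rfl⟩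
      · rintro ⟨hne, hle⟩
        by_cases hsp : (bx.1 : ℕ) = r ∧ (bx.2 : ℕ) = m
        · exfalso
          apply hne
          obtain ⟨i, j⟩ := bx
          have q1 : (i : ℕ) = r := hsp.1
          have q2 : (j : ℕ) = m := hsp.2
          have ei : i = rf := Fin.ext (by omega)
          subst ei
          exact congrArg (fun z => (⟨i, z⟩ : SBox a)) (Fin.ext q2)
        · rw [hvn bx hsp]
          exact (Finset.mem_filter.mp hle).2
    have hmem : (⟨rf, ⟨m, hx₀lt⟩⟩ : SBox a) ∈
        Finset.univ.filter (fun bx : SBox a => (trivF a bx : ℕ) ≤ r) := by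
      simp only [Finset.mem_filter, Finset.mem_univ, true_and, trivF]
      exact Finset.mem_filter.mpr ⟨Finset.mem_univ _, le_of_eq hrfv⟩
    rw [ecnt, ecnt, hset, Finset.card_erase_of_mem hmem]
    have : 0 < (Finset.univ.filter (fun bx : SBox a => (trivF a bx : ℕ) ≤ r)).card :=
      Finset.card_pos.mpr ⟨_, hmem⟩
    omega

lemma dropMk {n : ℕ} (a : Fin n → ℕ) (r : ℕ) (hr : r + 1 < n) (hr0 : r < n)
    (hbig : a ⟨r, hr0⟩ + 2 ≤ a ⟨r + 1, hr⟩) :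
    ∃ S : Filling n n a,
      (RowsWeakDecr S ∧ ColumnsDistinct S ∧ FirstEntryRowIndex S ∧ TriplesAB S) ∧
      ecnt S r = ecnt (trivF a) r + 1 := by
  classical
  obtain ⟨rf, hrfv⟩ : ∃ z : Fin n, (z : ℕ) = r := ⟨⟨r, by omega⟩, rfl⟩
  obtain ⟨rf1, hrf1v⟩ : ∃ z : Fin n, (z : ℕ) = r + 1 := ⟨⟨r + 1, hr⟩, rfl⟩
  have e1 : (⟨r + 1, hr⟩ : Fin n) = rf1 := Fin.ext hrf1v.symm
  have e2 : (⟨r, hr0⟩ : Fin n) = rf := Fin.ext hrfv.symm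
  rw [e1, e2] at hbig
  obtain ⟨m, ha⟩ : ∃ m, a rf1 = m + 1 := ⟨a rf1 - 1, by omega⟩
  have hb : a rf + 1 ≤ m := by omega
  refine ⟨fun bx => if (bx.1 : ℕ) = r + 1 ∧ (bx.2 : ℕ) = m then rf else bx.1, ?_⟩
  set S : Filling n n a :=
    (fun bx => if (bx.1 : ℕ) = r + 1 ∧ (bx.2 : ℕ) = m then rf else bx.1) with hS
  have hvn : ∀ bx : SBox a, ¬((bx.1 : ℕ) = r + 1 ∧ (bx.2 : ℕ) = m) → S bx = bx.1 := by
    intro bx h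
    simp only [hS, if_neg h]
  have hvs : ∀ bx : SBox a, (bx.1 : ℕ) = r + 1 ∧ (bx.2 : ℕ) = m → S bx = rf := by
    intro bx h
    simp only [hS, if_pos h]
  have hvn' : ∀ (i : Fin n) (j : Fin (a i)), ¬((i : ℕ) = r + 1 ∧ (j : ℕ) = m) →
      S ⟨i, j⟩ = i := fun i j h => hvn ⟨i, j⟩ h
  have hvs' : ∀ (i : Fin n) (j : Fin (a i)), (i : ℕ) = r + 1 ∧ (j : ℕ) = m →
      S ⟨i, j⟩ = rf := fun i j h => hvs ⟨i, j⟩ h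
  have hrow : ∀ i : Fin n, (i : ℕ) = r + 1 → a i = m + 1 := by
    intro i h
    have : i = rf1 := Fin.ext (by omega)
    rw [this, ha]
  constructor
  · refine ⟨?_, ?_, ?_, ?_, ?_⟩
    · -- RowsWeakDecr
      intro i j j' hjj'
      rw [Fin.le_def] at hjj' ⊢
      by_cases h2 : (i : ℕ) = r + 1 ∧ (j' : ℕ) = m
      · by_cases h1 : (i : ℕ) = r + 1 ∧ (j : ℕ) = m
        · rw [hvs' i j h1, hvs' i j' h2]
        · rw [hvs' i j' h2, hvn' i j h1]
          omega
      · rw [hvn' i j' h2]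
        by_cases h1 : (i : ℕ) = r + 1 ∧ (j : ℕ) = m
        · exfalso
          have hai : a i = m + 1 := hrow i h1.1
          have := j'.isLt
          exact h2 ⟨h1.1, by omega⟩
        · rw [hvn' i j h1]
    · -- ColumnsDistinct
      intro i i' hne j j' hcc heq
      apply hne
      by_cases h1 : (i : ℕ) = r + 1 ∧ (j : ℕ) = m
      · rw [hvs' i j h1] at heq
        by_cases h2 : (i' : ℕ) = r + 1 ∧ (j' : ℕ) = m
        · exact Fin.ext (by omega)
        · exfalso
          rw [hvn' i' j' h2] at heq
          have ei : i' = rf := heq.symm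
          have h3 : (j' : ℕ) < a rf := by rw [← ei]; exact j'.isLt
          omega
      · rw [hvn' i j h1] at heq
        by_cases h2 : (i' : ℕ) = r + 1 ∧ (j' : ℕ) = m
        · exfalso
          rw [hvs' i' j' h2] at heq
          have ei : i = rf := heq
          have h3 : (j : ℕ) < a rf := by rw [← ei]; exact j.isLt
          omega
        · rw [hvn' i' j' h2] at heq
          exact heq
    · -- FirstEntryRowIndex
      intro i h
      refine hvn' i ⟨0,h⟩ ?_
      simp only
      omega
    · -- Type A triples
      intro i i' hii' hcc k h1 h2 hcon
      obtain ⟨c1, c2⟩ := hcon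
      rw [Fin.lt_def] at hii'
      rw [Fin.le_def] at c1 c2
      by_cases hB2 : (i' : ℕ) = r + 1 ∧ (k + 1 : ℕ) = m
      · rw [hvs' i' ⟨k + 1,h2⟩ (by simpa using hB2)] at c1 c2
        have hB1 : ¬((i : ℕ) = r + 1 ∧ (k : ℕ) = m) := by omega
        have hB3 : ¬((i : ℕ) = r + 1 ∧ (k + 1 : ℕ) = m) := by omega
        rw [hvn' i ⟨k,Nat.lt_of_succ_lt h1⟩ (by simpa using hB1)] at c1
        rw [hvn' i ⟨k + 1,h1⟩ (by simpa using hB3)] at c2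
        -- c1 : r ≤ i, c2 : i ≤ r, so i = rf
        have hi : i = rf := Fin.ext (by omega)
        have hcc' : a rf1 ≤ a rf := by
          have ei' : i' = rf1 := Fin.ext (by omega)
          rw [← ei', ← hi]
          exact hcc
        omega
      · rw [hvn' i' ⟨k + 1,h2⟩ (by simpa using hB2)] at c1 c2
        by_cases hB1 : (i : ℕ) = r + 1 ∧ (k : ℕ) = m
        · rw [hvs' i ⟨k,Nat.lt_of_succ_lt h1⟩ (by simpa using hB1)] at c1
          omega
        · rw [hvn' i ⟨k,Nat.lt_of_succ_lt h1⟩ (by simpa using hB1)] at c1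
          omega
    · -- Type B triples
      intro i i' hii' hcc k h1 h2 hcon
      obtain ⟨c1, c2⟩ := hcon
      rw [Fin.lt_def] at hii'
      rw [Fin.le_def] at c1 c2
      by_cases hB2 : (i' : ℕ) = r + 1 ∧ (k + 1 : ℕ) = m
      · rw [hvs' i' ⟨k + 1,h1⟩ (by simpa using hB2)] at c2
        have hB1 : ¬((i : ℕ) = r + 1 ∧ (k : ℕ) = m) := by omega
        rw [hvn' i ⟨k,h2⟩ (by simpa using hB1)] at c1 c2
        -- c2 : r ≤ i, i < i' = r+1, so i = rf
        have hi : i = rf := Fin.ext (by omega)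
        have h4 : k < a rf := by rw [← hi]; exact h2
        omega
      · rw [hvn' i' ⟨k + 1,h1⟩ (by simpa using hB2)] at c2
        by_cases hB1 : (i : ℕ) = r + 1 ∧ (k : ℕ) = m
        · rw [hvs' i ⟨k,h2⟩ (by simpa using hB1)] at c1 c2
          by_cases hB3 : (i' : ℕ) = r + 1 ∧ (k : ℕ) = m
          · omega
          · rw [hvn' i' ⟨k,Nat.lt_of_succ_lt h1⟩ (by simpa using hB3)] at c1
            omega
        · rw [hvn' i ⟨k,h2⟩ (by simpa using hB1)] at c1 c2
          omega
  · -- counting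
    have hx₁lt : m < a rf1 := by omega
    have hset : Finset.univ.filter (fun bx : SBox a => (S bx : ℕ) ≤ r) =
        insert (⟨rf1, ⟨m, hx₁lt⟩⟩ : SBox a)
          (Finset.univ.filter (fun bx : SBox a => (trivF a bx : ℕ) ≤ r)) := by
      ext bx
      simp only [Finset.mem_insert, Finset.mem_filter, Finset.mem_univ, true_and, trivF]
      constructor
      · intro hbx
        by_cases hsp : (bx.1 : ℕ) = r + 1 ∧ (bx.2 : ℕ) = m
        · left
          obtain ⟨i, j⟩ := bx
          have q1 : (i : ℕ) = r + 1 := hsp.1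
          have q2 : (j : ℕ) = m := hsp.2
          have ei : i = rf1 := Fin.ext (by omega)
          subst ei
          exact congrArg (fun z => (⟨i, z⟩ : SBox a)) (Fin.ext q2)
        · right
          rw [hvn bx hsp] at hbx
          exact Finset.mem_filter.mpr ⟨Finset.mem_univ _, hbx⟩
      · rintro (hbe | hle)
        · rw [hbe, hvs (⟨rf1, ⟨m, hx₁lt⟩⟩ : SBox a) (by constructor <;> simpa using hrf1v)]
          omega
        · have hsp : ¬((bx.1 : ℕ) = r + 1 ∧ (bx.2 : ℕ) = m) := by
            intro hsp
            have h5 : (bx.1 : ℕ) ≤ r := (Finset.mem_filter.mp hle).2; omega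
          rw [hvn bx hsp]
          exact (Finset.mem_filter.mp hle).2
    have hnm : (⟨rf1, ⟨m, hx₁lt⟩⟩ : SBox a) ∉
        Finset.univ.filter (fun bx : SBox a => (trivF a bx : ℕ) ≤ r) := by
      simp only [Finset.mem_filter, Finset.mem_univ, true_and, trivF]
      intro hm; have h5 : (rf1 : ℕ) ≤ r := (Finset.mem_filter.mp hm).2; omega
    rw [ecnt, ecnt, hset, Finset.card_insert_of_notMem hnm]

end Sol5
section Sol6

open Finset

lemma exists_of_genfun_eq {m m' n : ℕ} {c : Fin m → ℕ} {c' : Fin m' → ℕ}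
    {P : Filling m n c → Prop} {Q : Filling m' n c' → Prop}
    (h : genfun c P = genfun c' Q) {w : Fin n →₀ ℕ}
    (hw : ∃ T, P T ∧ wtF T = w) : ∃ S, Q S ∧ wtF S = w := by
  classical
  by_contra hno
  push_neg at hno
  obtain ⟨T, hT, hwT⟩ := hw
  have hL : 0 < MvPolynomial.coeff w (genfun c P) := by
    rw [coeff_genfun]
    norm_cast
    refine Finset.card_pos.mpr ⟨T, ?_⟩
    simp only [Finset.mem_filter, Finset.mem_univ, true_and]
    exact ⟨hT, hwT⟩
  have hR : MvPolynomial.coeff w (genfun c' Q) = 0 := by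
    rw [coeff_genfun]
    norm_cast
    rw [Finset.card_eq_zero, Finset.eq_empty_iff_forall_notMem]
    intro S hS
    simp only [Finset.mem_filter, Finset.mem_univ, true_and] at hS
    exact hno S hS.1 hS.2
  rw [h, hR] at hL
  exact lt_irrefl 0 hL

lemma genfun_eq_monomial {n : ℕ} (c : Fin n → ℕ) (P : Filling n n c → Prop)
    (hP : ∀ T, P T ↔ T = trivF c) :
    genfun c P = monomial (wtF (trivF c)) (1 : ℤ) := by
  classical
  unfold genfun
  have hfil : Finset.univ.filter P = {trivF c} := by
    ext T
    simp only [Finset.mem_filter, Finset.mem_univ, true_and, Finset.mem_singleton]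
    exact hP T
  rw [hfil, Finset.sum_singleton, fmono_eq]

lemma monomial_trivF {n : ℕ} (c : Fin n → ℕ) :
    monomial (wtF (trivF c)) (1 : ℤ) = ∏ i : Fin n, X i ^ c i := by
  calc monomial (wtF (trivF c)) (1 : ℤ)
      = ∏ x ∈ (wtF (trivF c)).support, X x ^ (wtF (trivF c)) x :=
        (MvPolynomial.prod_X_pow_eq_monomial).symm
    _ = ∏ i : Fin n, X i ^ (wtF (trivF c)) i :=
        Finset.prod_subset (Finset.subset_univ _) (fun x _ hx => by
          rw [Finsupp.notMem_support_iff.mp hx, pow_zero])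
    _ = ∏ i : Fin n, X i ^ c i :=
        Finset.prod_congr rfl (fun i _ => by rw [wtF_trivF])

lemma part2Lemma {n : ℕ} (a : Fin n → ℕ)
    (hcond : ∀ (i : ℕ) (h : i + 1 < n),
      a ⟨i, Nat.lt_of_succ_lt h⟩ ≤ a ⟨i + 1, h⟩ + 1 ∧ a ⟨i + 1, h⟩ ≤ a ⟨i, Nat.lt_of_succ_lt h⟩ + 1) :
    youngAtom n a = atom n a ∧ atom n a = ∏ i : Fin n, X i ^ a i := by
  classical
  have hY : youngAtom n a = monomial (wtF (trivF a)) (1 : ℤ) := by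
    unfold youngAtom
    refine genfun_eq_monomial a _ (fun T => ⟨?_, ?_⟩)
    · rintro ⟨h1, h2, h3, h4⟩
      exact funext (trivOfNoDescent h1 h2 h3 h4 (fun i h => (hcond i h).1))
    · rintro rfl
      exact trivF_Y a
  have hA : atom n a = monomial (wtF (trivF a)) (1 : ℤ) := by
    unfold atom
    refine genfun_eq_monomial a _ (fun T => ⟨?_, ?_⟩)
    · rintro ⟨h1, h2, h3, h4⟩
      exact funext (trivOfNoAscent h1 h2 h3 h4 (fun i h => (hcond i h).2))
    · rintro rfl
      exact trivF_A a
  exact ⟨by rw [hY, hA], by rw [hA, monomial_trivF]⟩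

end Sol6

theorem youngAtom_eq_atom_iff (n : ℕ) (hn : 0 < n) (a b : Fin n → ℕ) :
    (youngAtom n a = atom n b ↔
      a = b ∧ ∀ (i : ℕ) (h : i + 1 < n),
        a ⟨i, by omega⟩ ≤ a ⟨i + 1, h⟩ + 1 ∧ a ⟨i + 1, h⟩ ≤ a ⟨i, by omega⟩ + 1) ∧
    ((∀ (i : ℕ) (h : i + 1 < n),
        a ⟨i, by omega⟩ ≤ a ⟨i + 1, h⟩ + 1 ∧ a ⟨i + 1, h⟩ ≤ a ⟨i, by omega⟩ + 1) →
      youngAtom n a = atom n a ∧ atom n a = ∏ i : Fin n, X i ^ a i) := by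
  classical
  constructor
  · constructor
    · intro heq
      have heqg : genfun (n := n) a (fun T =>
            RowsWeakIncr T ∧ ColumnsDistinct T ∧ FirstEntryRowIndex T ∧
              TriplesYoung T) =
          genfun (n := n) b (fun S =>
            RowsWeakDecr S ∧ ColumnsDistinct S ∧ FirstEntryRowIndex S ∧
              TriplesAB S) := heq
      obtain ⟨S, hSp, hSw⟩ := exists_of_genfun_eq heqg ⟨trivF a, trivF_Y a, rfl⟩
      obtain ⟨T, hTp, hTw⟩ := exists_of_genfun_eq heqg.symm ⟨trivF b, trivF_A b, rfl⟩
      have hab : a = b :=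
        weights_eq hSp.1 hSp.2.1 hSp.2.2.1 hSp.2.2.2
          (fun v => by rw [hSw]; exact wtF_trivF a v)
          hTp.1 hTp.2.1 hTp.2.2.1 hTp.2.2.2
          (fun v => by rw [hTw]; exact wtF_trivF b v)
      subst hab
      refine ⟨rfl, ?_⟩
      intro i h
      constructor
      · by_contra hcon
        push_neg at hcon
        have hcon' : a ⟨i + 1, h⟩ + 2 ≤ a ⟨i, Nat.lt_of_succ_lt h⟩ := hcon
        obtain ⟨T', hT'p, hT'c⟩ := raiseMk a i h (Nat.lt_of_succ_lt h) hcon'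
        obtain ⟨S', hS'p, hS'w⟩ := exists_of_genfun_eq heqg ⟨T', hT'p, rfl⟩
        have e1 : ecnt S' i = ecnt T' i := ecnt_congr hS'w i
        have e2 : ecnt (trivF a) i ≤ ecnt S' i := ecnt_trivF_le hS'p.1 hS'p.2.2.1 i
        omega
      · by_contra hcon
        push_neg at hcon
        have hcon' : a ⟨i, Nat.lt_of_succ_lt h⟩ + 2 ≤ a ⟨i + 1, h⟩ := hcon
        obtain ⟨S', hS'p, hS'c⟩ := dropMk a i h (Nat.lt_of_succ_lt h) hcon'
        obtain ⟨T', hT'p, hT'w⟩ := exists_of_genfun_eq heqg.symm ⟨S', hS'p, rfl⟩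
        have e1 : ecnt T' i = ecnt S' i := ecnt_congr hT'w i
        have e2 : ecnt T' i ≤ ecnt (trivF a) i := ecnt_le_trivF hT'p.1 hT'p.2.2.1 i
        omega
    · rintro ⟨rfl, hcond⟩
      exact (part2Lemma a hcond).1
  · exact part2Lemma a

end PaperYR
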